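/- Let X and Y be finite sets, μ a probability measure on X with μ(x) > 0 for all x, ν a probability measure on Y with ν(y) > 0 for all y, and R : X × Y → [0,∞) with Σ_y R(x,y) > 0 for every x and Σ_x R(x,y) > 0 for every y. Let (φ_n)_{n≥0} be the Sinkhorn iterates φ_{n+1} = ((φ_n)⁺)⁻ starting from any φ₀ : Y → ℝ, with Y-marginals ρ_n(y) = Σ_x e^{φ_n(y) − (φ_n)⁺(x)} R(x,y). Then the relative entropies decrease: H(ρ_{n+1}|ν) ≤ H(ρ_n|ν) for all n ≥ 0. -/

import Mathlib

open scoped BigOperators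

/-- The `+`-transform: `φ⁺(x) = ln( Σ_y e^{φ(y)} R(x,y) / μ(x) )`. -/
noncomputable def plusT {X Y : Type*} [Fintype Y] (μ : X → ℝ) (R : X → Y → ℝ)
    (φ : Y → ℝ) (x : X) : ℝ :=
  Real.log ((∑ y, Real.exp (φ y) * R x y) / μ x)

/-- The `−`-transform: `ψ⁻(y) = −ln( Σ_x e^{−ψ(x)} R(x,y) / ν(y) )`. -/
noncomputable def minusT {X Y : Type*} [Fintype X] (ν : Y → ℝ) (R : X → Y → ℝ)
    (ψ : X → ℝ) (y : Y) : ℝ :=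
  -Real.log ((∑ x, Real.exp (-ψ x) * R x y) / ν y)

/-- The coupling `π(φ)(x,y) = e^{φ(y) − φ⁺(x)} R(x,y)`. -/
noncomputable def coupling {X Y : Type*} [Fintype Y] (μ : X → ℝ) (R : X → Y → ℝ)
    (φ : Y → ℝ) (x : X) (y : Y) : ℝ :=
  Real.exp (φ y - plusT μ R φ x) * R x y

/-!
Write `ψ = φ⁺`, `φ' = ψ⁻` and `q(x,y) = e^{φ'(y) − ψ(x)} R(x,y)` (`minusCoupling ν R ψ`),
a measure with `Y`-marginal `ν`. Relative to `q`, the coupling `π(φ)` has density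
`e^{φ(y) − φ'(y)}`, a function of `y` alone, and `π(φ')` has density `e^{ψ(x) − φ'⁺(x)}`, a
function of `x` alone; both have `X`-marginal `μ`. By the log-sum inequality, passing to a
marginal does not increase relative entropy, and leaves it unchanged when the density is constant
on the fibres of that marginal. Hence `H(ρ_{n+1}|ν) ≤ H(π(φ')|q) = H(μ|q_X) ≤ H(π(φ)|q) = H(ρ_n|ν)`.
-/

open Real Finset

noncomputable def relEntropy {ι : Type*} [Fintype ι] (p q : ι → ℝ) : ℝ :=
  ∑ i, p i * log (p i / q i)

lemma mul_log_add_sub_le_mul_log_div {p q t : ℝ} (hp : 0 ≤ p) (hq : 0 ≤ q) (ht : 0 < t)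
    (hpq : q = 0 → p = 0) : p * log t + p - q * t ≤ p * log (p / q) := by
  rcases hp.eq_or_lt with rfl | hp
  · simpa using mul_nonneg hq ht.le
  have hq : 0 < q := hq.lt_of_ne fun h => hp.ne' (hpq h.symm)
  have h := mul_le_mul_of_nonneg_left (log_le_sub_one_of_pos (by positivity : 0 < t * q / p)) hp.le
  have e : p * (t * q / p - 1) = t * q - p := by field_simp
  rw [log_div (by positivity) hp.ne', log_mul ht.ne' hq.ne', e] at h
  rw [log_div hp.ne' hq.ne']
  linarith

section LogSum

variable {ι : Type*} [Fintype ι] {p q : ι → ℝ}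

theorem mul_log_sum_div_sum_le_relEntropy (hp : 0 ≤ p) (hq : 0 ≤ q)
    (hpq : ∀ i, q i = 0 → p i = 0) :
    (∑ i, p i) * log ((∑ i, p i) / ∑ i, q i) ≤ relEntropy p q := by
  rcases (Fintype.sum_nonneg hp).eq_or_lt with hP | hP
  · simp [relEntropy, (Fintype.sum_eq_zero_iff_of_nonneg hp).1 hP.symm]
  have hQ : 0 < ∑ i, q i := (Fintype.sum_nonneg hq).lt_of_ne fun hQ => hP.ne' <|
    sum_eq_zero fun i _ => hpq i (congrFun ((Fintype.sum_eq_zero_iff_of_nonneg hq).1 hQ.symm) i)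
  have h := sum_le_sum fun i (_ : i ∈ univ) =>
    mul_log_add_sub_le_mul_log_div (hp i) (hq i) (div_pos hP hQ) (hpq i)
  rwa [sum_sub_distrib, sum_add_distrib, ← sum_mul, ← sum_mul, mul_div_cancel₀ _ hQ.ne',
    add_sub_cancel_right] at h

lemma mul_log_div_of_eq_exp_mul {a b c : ℝ} (h : a = exp c * b) : a * log (a / b) = c * a := by
  subst h
  rcases eq_or_ne b 0 with rfl | hb
  · simp
  rw [mul_div_cancel_right₀ _ hb, log_exp, mul_comm]

theorem relEntropy_eq_mul_log_sum_div_sum {c : ℝ} (h : ∀ i, p i = exp c * q i) :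
    relEntropy p q = (∑ i, p i) * log ((∑ i, p i) / ∑ i, q i) := by
  have hsum : ∑ i, p i = exp c * ∑ i, q i := by simp only [h, mul_sum]
  rw [relEntropy, mul_log_div_of_eq_exp_mul hsum, mul_sum]
  exact sum_congr rfl fun i _ => mul_log_div_of_eq_exp_mul (h i)

end LogSum

section Marginal

variable {ι κ : Type*} [Fintype ι] [Fintype κ] {p q : ι → κ → ℝ}

theorem relEntropy_sum_le_sum_relEntropy (hp : 0 ≤ p) (hq : 0 ≤ q)
    (hpq : ∀ i j, q i j = 0 → p i j = 0) :
    relEntropy (fun i => ∑ j, p i j) (fun i => ∑ j, q i j) ≤ ∑ i, relEntropy (p i) (q i) :=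
  sum_le_sum fun i _ => mul_log_sum_div_sum_le_relEntropy (hp i) (hq i) (hpq i)

theorem relEntropy_sum_eq_sum_relEntropy {c : ι → ℝ} (h : ∀ i j, p i j = exp (c i) * q i j) :
    relEntropy (fun i => ∑ j, p i j) (fun i => ∑ j, q i j) = ∑ i, relEntropy (p i) (q i) :=
  sum_congr rfl fun i _ => (relEntropy_eq_mul_log_sum_div_sum (h i)).symm

lemma sum_relEntropy_comm :
    ∑ i, relEntropy (p i) (q i) = ∑ j, relEntropy (fun i => p i j) (fun i => q i j) :=
  sum_comm

end Marginal

theorem relEntropy_marginal_le_of_density {X Y : Type*} [Fintype X] [Fintype Y]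
    {p p' q : X → Y → ℝ} {a : X → ℝ} {b : Y → ℝ} (hq : 0 ≤ q)
    (hp : ∀ x y, p x y = exp (b y) * q x y) (hp' : ∀ x y, p' x y = exp (a x) * q x y)
    (hmarg : ∀ x, ∑ y, p' x y = ∑ y, p x y) :
    relEntropy (fun y => ∑ x, p' x y) (fun y => ∑ x, q x y) ≤
      relEntropy (fun y => ∑ x, p x y) (fun y => ∑ x, q x y) := by
  have hp₀ : 0 ≤ p := fun x y => hp x y ▸ mul_nonneg (exp_pos _).le (hq x y)
  have hp'₀ : 0 ≤ p' := fun x y => hp' x y ▸ mul_nonneg (exp_pos _).le (hq x y)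
  have hpq x y (h : q x y = 0) : p x y = 0 := by rw [hp, h, mul_zero]
  have hp'q x y (h : q x y = 0) : p' x y = 0 := by rw [hp', h, mul_zero]
  calc relEntropy (fun y => ∑ x, p' x y) (fun y => ∑ x, q x y)
      ≤ ∑ y, relEntropy (fun x => p' x y) (fun x => q x y) :=
        relEntropy_sum_le_sum_relEntropy (fun y x => hp'₀ x y) (fun y x => hq x y)
          (fun y x => hp'q x y)
    _ = relEntropy (fun x => ∑ y, p' x y) (fun x => ∑ y, q x y) := by
        rw [← sum_relEntropy_comm, relEntropy_sum_eq_sum_relEntropy hp']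
    _ = relEntropy (fun x => ∑ y, p x y) (fun x => ∑ y, q x y) := by simp only [hmarg]
    _ ≤ ∑ x, relEntropy (p x) (q x) := relEntropy_sum_le_sum_relEntropy hp₀ hq hpq
    _ = relEntropy (fun y => ∑ x, p x y) (fun y => ∑ x, q x y) := by
        rw [sum_relEntropy_comm, relEntropy_sum_eq_sum_relEntropy fun y x => hp x y]

lemma sum_exp_mul_pos {ι : Type*} [Fintype ι] {r : ι → ℝ} (hr : ∀ i, 0 ≤ r i)
    (h : 0 < ∑ i, r i) (f : ι → ℝ) : 0 < ∑ i, exp (f i) * r i := by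
  obtain ⟨i, -, hi⟩ := (sum_pos_iff_of_nonneg fun i _ => hr i).1 h
  exact sum_pos' (fun i _ => mul_nonneg (exp_pos _).le (hr i)) ⟨i, mem_univ i, by positivity⟩

noncomputable def minusCoupling {X Y : Type*} [Fintype X] (ν : Y → ℝ) (R : X → Y → ℝ)
    (ψ : X → ℝ) (x : X) (y : Y) : ℝ :=
  exp (minusT ν R ψ y - ψ x) * R x y

section Sinkhorn

variable {X Y : Type*} (μ : X → ℝ) (ν : Y → ℝ) (R : X → Y → ℝ)

lemma sum_coupling [Fintype Y] {x : X} (hμ : 0 < μ x) (hR : ∀ y, 0 ≤ R x y)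
    (hrow : 0 < ∑ y, R x y) (φ : Y → ℝ) : ∑ y, coupling μ R φ x y = μ x := by
  have hS := sum_exp_mul_pos hR hrow φ
  simp only [coupling, plusT, exp_sub, exp_log (div_pos hS hμ), div_mul_eq_mul_div, ← sum_div]
  field_simp

lemma sum_minusCoupling [Fintype X] {y : Y} (hν : 0 < ν y) (hR : ∀ x, 0 ≤ R x y)
    (hcol : 0 < ∑ x, R x y) (ψ : X → ℝ) : ∑ x, minusCoupling ν R ψ x y = ν y := by
  have hS := sum_exp_mul_pos hR hcol (fun x => -ψ x)
  simp only [minusCoupling, minusT, sub_eq_add_neg, exp_add, exp_neg (log _),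
    exp_log (div_pos hS hν), mul_assoc, ← mul_sum]
  field_simp

lemma coupling_eq_exp_mul_minusCoupling [Fintype X] [Fintype Y] (φ : Y → ℝ) (x : X) (y : Y) :
    coupling μ R φ x y =
      exp (φ y - minusT ν R (plusT μ R φ) y) * minusCoupling ν R (plusT μ R φ) x y := by
  rw [coupling, minusCoupling, ← mul_assoc, ← exp_add, sub_add_sub_cancel]

lemma coupling_minusT_eq_exp_mul_minusCoupling [Fintype X] [Fintype Y] (ψ : X → ℝ)
    (x : X) (y : Y) :
    coupling μ R (minusT ν R ψ) x y =
      exp (ψ x - plusT μ R (minusT ν R ψ) x) * minusCoupling ν R ψ x y := by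
  rw [coupling, minusCoupling, ← mul_assoc, ← exp_add]
  ring_nf

end Sinkhorn

theorem sinkhorn_relativeEntropy_decreasing_general {X Y : Type*} [Fintype X] [Fintype Y]
    (μ : X → ℝ) (ν : Y → ℝ) (R : X → Y → ℝ)
    (hμpos : ∀ x, 0 < μ x)
    (hνpos : ∀ y, 0 < ν y)
    (hR : ∀ x y, 0 ≤ R x y)
    (hrow : ∀ x, 0 < ∑ y, R x y) (hcol : ∀ y, 0 < ∑ x, R x y)
    (φ : ℕ → Y → ℝ)
    (hiter : ∀ n, φ (n + 1) = minusT ν R (plusT μ R (φ n)))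
    (ρ : ℕ → Y → ℝ) (hρ : ∀ n y, ρ n y = ∑ x, coupling μ R (φ n) x y) :
    ∀ n : ℕ, ∑ y, ρ (n + 1) y * Real.log (ρ (n + 1) y / ν y) ≤
      ∑ y, ρ n y * Real.log (ρ n y / ν y) := by
  intro n
  set q := minusCoupling ν R (plusT μ R (φ n))
  have hρ' m : ρ m = fun y => ∑ x, coupling μ R (φ m) x y := funext (hρ m)
  have hν : ν = fun y => ∑ x, q x y :=
    funext fun y => (sum_minusCoupling ν R (hνpos y) (hR · y) (hcol y) _).symm
  change relEntropy (ρ (n + 1)) ν ≤ relEntropy (ρ n) ν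
  rw [hρ', hρ', hν, hiter]
  refine relEntropy_marginal_le_of_density (fun x y => mul_nonneg (exp_pos _).le (hR x y))
    (coupling_eq_exp_mul_minusCoupling μ ν R (φ n))
    (coupling_minusT_eq_exp_mul_minusCoupling μ ν R _) fun x => ?_
  rw [sum_coupling μ R (hμpos x) (hR x) (hrow x), sum_coupling μ R (hμpos x) (hR x) (hrow x)]

/-- along the Sinkhorn iterates, the relative entropies of the
`Y`-marginals decrease: `H(ρ_{n+1}|ν) ≤ H(ρ_n|ν)` for all `n ≥ 0`. -/
theorem sinkhorn_relativeEntropy_decreasing {X Y : Type*} [Fintype X] [Fintype Y]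
    (μ : X → ℝ) (ν : Y → ℝ) (R : X → Y → ℝ)
    (hμpos : ∀ x, 0 < μ x) (hμ : ∑ x, μ x = 1)
    (hνpos : ∀ y, 0 < ν y) (hν : ∑ y, ν y = 1)
    (hR : ∀ x y, 0 ≤ R x y)
    (hrow : ∀ x, 0 < ∑ y, R x y) (hcol : ∀ y, 0 < ∑ x, R x y)
    (φ : ℕ → Y → ℝ)
    (hiter : ∀ n, φ (n + 1) = minusT ν R (plusT μ R (φ n)))
    (ρ : ℕ → Y → ℝ) (hρ : ∀ n y, ρ n y = ∑ x, coupling μ R (φ n) x y) :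
    ∀ n : ℕ, ∑ y, ρ (n + 1) y * Real.log (ρ (n + 1) y / ν y) ≤
      ∑ y, ρ n y * Real.log (ρ n y / ν y) :=
  sinkhorn_relativeEntropy_decreasing_general μ ν R hμpos hνpos hR hrow hcol φ hiter ρ hρ
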